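/- arXiv:1608.06726 — 2 statements merged into one kernel-verified Lean document; each statement's English description precedes it below -/
import Mathlib

section
/- The number of orbits of the right SL(2,ℤ)-action on the set of 2×2 integer matrices with determinant d (d ≥ 1) equals the divisor sum 𝔇(d) = Σ_{k|d} k. -/
/-!
Transposition turns the right action into the left action of `SL(2, ℤ)` on
`FixedDetMatrix (Fin 2) ℤ d`, and Mathlib's reduction algorithm moves every matrix of that
action into `reps d`: upper triangular `!![a, b; 0, c]` with `0 < a` and `0 ≤ b < |c|`.
This form is unique in its orbit: an element of `SL(2, ℤ)` preserving it must be
`!![1, q; 0, 1]`, which shifts `b` by `q * c`. The orbits are therefore indexed by the pairs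
`(c, b)` with `c ∣ d` and `0 ≤ b < c`, and there are `∑ c ∣ d, c` of them.
-/

open Finset Matrix MatrixGroups MulAction FixedDetMatrices

namespace FixedDetMatrices

section

variable {n : Type*} [DecidableEq n] [Fintype n] {R : Type*} [CommRing R] {m : R}

def transposeEquiv : {M : Matrix n n R // M.det = m} ≃ FixedDetMatrix n R m where
  toFun M := ⟨M.1ᵀ, by rw [det_transpose, M.2]⟩
  invFun A := ⟨A.1ᵀ, by rw [det_transpose, A.2]⟩
  left_inv M := by simp
  right_inv A := ext' _ _ (transpose_transpose _)

@[simp]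
lemma coe_transposeEquiv (M : {M : Matrix n n R // M.det = m}) :
    (transposeEquiv M).1 = M.1ᵀ := rfl

def quotMulRightEquiv :
    Quot (fun A B : {M : Matrix n n R // M.det = m} =>
      ∃ S : SpecialLinearGroup n R, (B : Matrix n n R) = A * S) ≃
      orbitRel.Quotient (SpecialLinearGroup n R) (FixedDetMatrix n R m) :=
  Quot.congr transposeEquiv fun A B => by
    rw [orbitRel_apply, mem_orbit_symm]
    refine ⟨fun ⟨S, hS⟩ => ⟨S.transpose, ext' _ _ ?_⟩,
      fun ⟨g, hg⟩ => ⟨g.transpose, ?_⟩⟩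
    · simp [smul_coe, hS, transpose_mul]
    · simpa [smul_coe, transpose_mul] using congrArg (fun A => A.1ᵀ) hg.symm

end

variable {m : ℤ}

lemma mul_eq_of_mem_reps {A : FixedDetMatrix (Fin 2) ℤ m} (hA : A ∈ reps m) :
    A.1 0 0 * A.1 1 1 = m := by
  simpa [det_fin_two, hA.1] using A.2

lemma pos_one_one_of_mem_reps {A : FixedDetMatrix (Fin 2) ℤ m} (hm : 0 ≤ m)
    (hA : A ∈ reps m) :
    0 < A.1 1 1 := by
  have hc : A.1 1 1 ≠ 0 := abs_pos.mp ((abs_nonneg _).trans_lt hA.2.2.2)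
  have := mul_eq_of_mem_reps hA
  rcases hc.lt_or_gt with h | h
  · nlinarith [hA.2.1]
  · exact h

lemma exists_smul_mem_reps (hm : m ≠ 0) (A : FixedDetMatrix (Fin 2) ℤ m) :
    ∃ g : SL(2, ℤ), g • A ∈ reps m := by
  induction A using induction_on hm with
  | h0 A h10 h00 h01 h11 => exact ⟨1, by rw [one_smul]; exact ⟨h10, h00, h01, h11⟩⟩
  | hS B hB =>
    obtain ⟨g, hg⟩ := hB
    exact ⟨g * ModularGroup.S⁻¹, by rwa [mul_smul, inv_smul_smul]⟩
  | hT B hB =>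
    obtain ⟨g, hg⟩ := hB
    exact ⟨g * ModularGroup.T⁻¹, by rwa [mul_smul, inv_smul_smul]⟩

lemma eq_one_of_smul_mem_reps {A : FixedDetMatrix (Fin 2) ℤ m} {g : SL(2, ℤ)}
    (hA : A ∈ reps m) (hgA : g • A ∈ reps m) : g = 1 := by
  obtain ⟨h10, h00, h01, h11⟩ := hA
  obtain ⟨h10', h00', h01', h11'⟩ := hgA
  have hdet : g 0 0 * g 1 1 - g 0 1 * g 1 0 = 1 := by rw [← det_fin_two]; exact g.det_coe
  simp only [smul_coe, mul_apply, Fin.sum_univ_two, h10, mul_zero, add_zero] at h10' h00' h01' h11'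
  have hg10 : g 1 0 = 0 := (mul_eq_zero.mp h10').resolve_right h00.ne'
  have hg00 : g 0 0 = 1 := by
    rw [hg10, mul_zero, sub_zero] at hdet
    rcases Int.eq_one_or_neg_one_of_mul_eq_one hdet with h | h
    · exact h
    · nlinarith
  have hg11 : g 1 1 = 1 := by rwa [hg10, hg00, mul_zero, sub_zero, one_mul] at hdet
  have hg01 : g 0 1 = 0 := by
    rw [hg00, hg10, hg11, one_mul, zero_mul, zero_add, one_mul] at h11'
    rw [hg00, one_mul] at h01'
    have hlt : |A.1 0 1 + g 0 1 * A.1 1 1 - A.1 0 1| < |A.1 1 1| :=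
      abs_sub_lt_of_nonneg_of_lt h01' ((le_abs_self _).trans_lt h11') h01
        ((le_abs_self _).trans_lt h11)
    rw [add_sub_cancel_left, abs_mul] at hlt
    exact Int.abs_lt_one_iff.mp ((mul_lt_iff_lt_one_left ((abs_nonneg _).trans_lt h11)).mp hlt)
  ext i j
  fin_cases i <;> fin_cases j <;> simp [hg00, hg01, hg10, hg11]

lemma toNat_mem_divisors_sigma_of_mem_reps {n : ℕ} {A : FixedDetMatrix (Fin 2) ℤ n}
    (hA : A ∈ reps (n : ℤ)) :
    (⟨(A.1 1 1).toNat, (A.1 0 1).toNat⟩ : Σ _ : ℕ, ℕ) ∈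
      n.divisors.sigma fun c => range c := by
  have hc := pos_one_one_of_mem_reps (Int.natCast_nonneg n) hA
  have hac := mul_eq_of_mem_reps hA
  have hb := hA.2.2.2
  rw [abs_of_nonneg hA.2.2.1, abs_of_pos hc] at hb
  have hn : (0 : ℤ) < n := hac ▸ mul_pos hA.2.1 hc
  simp only [mem_sigma, Nat.mem_divisors, mem_range]
  refine ⟨⟨Int.natCast_dvd_natCast.mp ⟨A.1 0 0, ?_⟩, by omega⟩, by omega⟩
  rw [Int.toNat_of_nonneg hc.le]
  linarith

def repsEquiv (n : ℕ) : reps (n : ℤ) ≃ n.divisors.sigma fun c => range c where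
  toFun A := ⟨_, toNat_mem_divisors_sigma_of_mem_reps A.2⟩
  invFun x :=
    have hx := mem_sigma.mp x.2
    have hc := Nat.pos_of_mem_divisors hx.1
    ⟨⟨!![((n / x.1.1 : ℕ) : ℤ), x.1.2; 0, x.1.1], by
      rw [det_fin_two_of, mul_zero, sub_zero, ← Nat.cast_mul,
        Nat.div_mul_cancel (Nat.dvd_of_mem_divisors hx.1)]⟩,
      ⟨rfl, Nat.cast_pos.mpr (Nat.div_pos (Nat.divisor_le hx.1) hc), by simp,
        by simpa using mem_range.mp hx.2⟩⟩
  left_inv := by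
    rintro ⟨A, hA⟩
    have hc := pos_one_one_of_mem_reps (Int.natCast_nonneg n) hA
    have hac := mul_eq_of_mem_reps hA
    refine Subtype.ext (ext' _ _ (Matrix.ext fun i j => ?_))
    fin_cases i <;> fin_cases j
    · simpa [hc.le] using Int.ediv_eq_of_eq_mul_left hc.ne' hac.symm
    · simp [hA.2.2.1]
    · simp [hA.1]
    · simp [hc.le]
  right_inv x := by simp

lemma card_reps (n : ℕ) : Nat.card (reps (n : ℤ)) = ∑ c ∈ n.divisors, c := by
  rw [Nat.card_congr (repsEquiv n), Nat.card_eq_finsetCard, card_sigma]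
  simp

lemma card_orbitRel_quotient_eq_card_reps (hm : m ≠ 0) :
    Nat.card (orbitRel.Quotient SL(2, ℤ) (FixedDetMatrix (Fin 2) ℤ m)) = Nat.card (reps m) := by
  refine (Nat.card_eq_of_bijective (fun A : reps m => (⟦A.1⟧ : orbitRel.Quotient _ _))
    ⟨?_, ?_⟩).symm
  · rintro ⟨A, hA⟩ ⟨B, hB⟩ h
    obtain ⟨g, rfl⟩ : A ∈ orbit SL(2, ℤ) B := Quotient.exact h
    exact Subtype.ext <| by dsimp only; rw [eq_one_of_smul_mem_reps hB hA, one_smul]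
  · rintro ⟨A⟩
    obtain ⟨g, hg⟩ := exists_smul_mem_reps hm A
    exact ⟨⟨g • A, hg⟩, Quotient.sound (mem_orbit A g)⟩

end FixedDetMatrices

/-- The number of orbits of the right `SL(2,ℤ)`-action on the set of `2×2`
integer matrices with determinant `d ≥ 1` equals the divisor sum `𝔇(d)`. -/
theorem stmt_3 (d : ℤ) (hd : 1 ≤ d) :
    Nat.card (Quot (fun A B : {M : Matrix (Fin 2) (Fin 2) ℤ // M.det = d} =>
      ∃ S : Matrix.SpecialLinearGroup (Fin 2) ℤ,
        (B : Matrix (Fin 2) (Fin 2) ℤ) = (A : Matrix (Fin 2) (Fin 2) ℤ) * S))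
      = ∑ k ∈ (d.toNat).divisors, k := by
  obtain ⟨n, rfl⟩ := Int.eq_ofNat_of_zero_le (by omega : 0 ≤ d)
  rw [Nat.card_congr quotMulRightEquiv, card_orbitRel_quotient_eq_card_reps (by omega), card_reps,
    Int.toNat_natCast]
end

section
/- For a positive integer d ≡ 2 (mod 4), 3 times the number of triples (h, g, m) with hg = d, 0 ≤ m < h, g odd, h even, and m even equals 𝔇(d). -/
lemma card_even_range (n : ℕ) :
    ((Finset.range n).filter (fun m => Even m)).card = (n + 1) / 2 := by
  induction n with
  | zero => simp
  | succ k ih =>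
    rw [Finset.range_add_one, Finset.filter_insert]
    by_cases hk : Even k
    · rw [if_pos hk, Finset.card_insert_of_notMem (by simp)]
      obtain ⟨j, hj⟩ := hk
      omega
    · rw [if_neg hk]
      have : ¬ (2 ∣ k) := by
        intro h; exact hk (even_iff_two_dvd.mpr h)
      omega

/-- For `d ≡ 2 (mod 4)`, three times the number of triples `(h, g, m)` with
`hg = d`, `0 ≤ m < h`, `g` odd, `h` even and `m` even equals `𝔇(d)`. -/
theorem stmt_12 (d : ℕ) (hd : 0 < d) (hmod : d % 4 = 2) :
    3 * Nat.card {t : ℕ × ℕ × ℕ //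
        t.1 * t.2.1 = d ∧ t.2.2 < t.1 ∧ Odd t.2.1 ∧ Even t.1 ∧ Even t.2.2}
      = ∑ k ∈ d.divisors, k := by
  classical
  set n := d / 2 with hn
  have hdn : d = 2 * n := by omega
  have hnodd : n % 2 = 1 := by omega
  -- the sigma finset
  set B : Finset ((ℕ × ℕ) × ℕ) :=
    ((d.divisorsAntidiagonal.filter (fun p => Even p.1)) ×ˢ Finset.range d).filter
      (fun x => x.2 < x.1.1 ∧ Even x.2) with hB
  -- step 1: Nat.card = B.card
  have key : ∀ t : ℕ × ℕ × ℕ,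
      (t.1 * t.2.1 = d ∧ t.2.2 < t.1 ∧ Odd t.2.1 ∧ Even t.1 ∧ Even t.2.2) ↔
      ((t.1, t.2.1), t.2.2) ∈ B := by
    intro ⟨h, g, m⟩
    simp only [hB, Finset.mem_filter, Finset.mem_product, Nat.mem_divisorsAntidiagonal,
      Finset.mem_range]
    constructor
    · rintro ⟨h1, h2, _, h4, h5⟩
      have hh : h ≤ d := Nat.le_of_dvd hd ⟨g, h1.symm⟩
      exact ⟨⟨⟨⟨h1, by omega⟩, h4⟩, by omega⟩, h2, h5⟩
    · rintro ⟨⟨⟨⟨h1, _⟩, h4⟩, _⟩, h2, h5⟩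
      refine ⟨h1, h2, ?_, h4, h5⟩
      rcases Nat.even_or_odd g with hg | hg
      · exfalso
        obtain ⟨a, ha⟩ := h4
        obtain ⟨b, hb⟩ := hg
        have h4d : 4 ∣ d := ⟨a * b, by rw [← h1, ha, hb]; ring⟩
        omega
      · exact hg
  have hcard : Nat.card {t : ℕ × ℕ × ℕ //
      t.1 * t.2.1 = d ∧ t.2.2 < t.1 ∧ Odd t.2.1 ∧ Even t.1 ∧ Even t.2.2} = B.card := by
    rw [← Nat.card_eq_finsetCard]
    exact Nat.card_congr
      { toFun := fun t => ⟨((t.1.1, t.1.2.1), t.1.2.2), (key t.1).mp t.2⟩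
        invFun := fun x => ⟨(x.1.1.1, x.1.1.2, x.1.2), (key _).mpr (by simpa using x.2)⟩
        left_inv := fun t => rfl
        right_inv := fun x => rfl }
  rw [hcard]
  -- step 2: compute B.card fiberwise
  have hfiber : B.card = ∑ p ∈ d.divisorsAntidiagonal.filter (fun p => Even p.1), p.1 / 2 := by
    rw [Finset.card_eq_sum_card_fiberwise
      (f := fun x : (ℕ × ℕ) × ℕ => x.1)
      (t := d.divisorsAntidiagonal.filter (fun p => Even p.1))
      (by rintro x hx; simp only [hB, Finset.mem_coe, Finset.mem_filter, Finset.mem_product] at hx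
          exact Finset.mem_filter.mpr hx.1.1)]
    refine Finset.sum_congr rfl (fun p hp => ?_)
    simp only [Finset.mem_filter, Nat.mem_divisorsAntidiagonal] at hp
    obtain ⟨⟨hpd, hd0⟩, hpe⟩ := hp
    have hpl : p.1 ≤ d := Nat.le_of_dvd hd ⟨p.2, hpd.symm⟩
    have : B.filter (fun x => x.1 = p) =
        ((Finset.range p.1).filter (fun m => Even m)).image (fun m => (p, m)) := by
      ext ⟨q, m⟩
      simp only [hB, Finset.mem_filter, Finset.mem_product, Finset.mem_image,
        Nat.mem_divisorsAntidiagonal, Finset.mem_range]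
      constructor
      · rintro ⟨⟨⟨_, _⟩, hm1, hm2⟩, rfl⟩
        exact ⟨m, ⟨hm1, hm2⟩, rfl⟩
      · rintro ⟨m', ⟨hm1, hm2⟩, heq⟩
        have h1 : p = q := congrArg Prod.fst heq
        have h2 : m' = m := congrArg Prod.snd heq
        subst h1; subst h2
        exact ⟨⟨⟨⟨⟨hpd, hd0⟩, hpe⟩, by omega⟩, hm1, hm2⟩, rfl⟩
    rw [this, Finset.card_image_of_injective _ (fun a b hab => by injection hab),
      card_even_range]
    obtain ⟨a, ha⟩ := hpe
    omega
  rw [hfiber]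
  -- step 3: bijection with divisors of n
  have hsum : ∑ p ∈ d.divisorsAntidiagonal.filter (fun p => Even p.1), p.1 / 2
      = ∑ k ∈ n.divisors, k := by
    refine Finset.sum_nbij' (fun p => p.1 / 2) (fun k => (2 * k, n / k)) ?_ ?_ ?_ ?_ ?_
    · rintro ⟨a, b⟩ hp
      simp only [Finset.mem_filter, Nat.mem_divisorsAntidiagonal] at hp
      obtain ⟨⟨hab, _⟩, he⟩ := hp
      obtain ⟨c, hc⟩ := he
      have hcb : c * b = n := by
        refine Nat.eq_of_mul_eq_mul_left (show 0 < 2 by norm_num) ?_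
        rw [← hdn, ← hab, hc]; ring
      have ha2 : a / 2 = c := by omega
      simp only [Nat.mem_divisors]
      exact ⟨by rw [ha2]; exact ⟨b, hcb.symm⟩, by omega⟩
    · rintro k hk
      simp only [Nat.mem_divisors] at hk
      obtain ⟨⟨c, hc⟩, hn0⟩ := hk
      have hk0 : 0 < k := Nat.pos_of_dvd_of_pos ⟨c, hc⟩ (Nat.pos_of_ne_zero hn0)
      have hnk : n / k = c := by rw [hc, Nat.mul_div_cancel_left _ hk0]
      simp only [Finset.mem_filter, Nat.mem_divisorsAntidiagonal]
      refine ⟨⟨?_, by omega⟩, ⟨k, (two_mul k)⟩⟩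
      rw [hnk, hdn, hc]; ring
    · rintro ⟨a, b⟩ hp
      simp only [Finset.mem_filter, Nat.mem_divisorsAntidiagonal] at hp
      obtain ⟨⟨hab, _⟩, he⟩ := hp
      obtain ⟨c, hc⟩ := he
      have hcb : c * b = n := by
        refine Nat.eq_of_mul_eq_mul_left (show 0 < 2 by norm_num) ?_
        rw [← hdn, ← hab, hc]; ring
      have ha2 : a / 2 = c := by omega
      have ha0 : a ≠ 0 := by rintro rfl; simp at hab; omega
      have hc0 : 0 < c := by omega
      have hnc : n / c = b := by rw [← hcb, Nat.mul_div_cancel_left _ hc0]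
      show (2 * ((a, b).1 / 2), n / ((a, b).1 / 2)) = (a, b)
      rw [Prod.mk.injEq]
      simp only
      rw [ha2, hnc]
      exact ⟨by omega, rfl⟩
    · rintro k hk
      show 2 * k / 2 = k
      omega
    · rintro ⟨a, b⟩ _; rfl
  rw [hsum, hdn]
  rw [Nat.Coprime.sum_divisors_mul (Nat.coprime_two_left.mpr (Nat.odd_iff.mpr hnodd))]
  have h2 : ∑ k ∈ (2 : ℕ).divisors, k = 3 := by decide
  rw [h2]
end
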